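/- (Mordukhovich's criterion at infinity, subdifferential form.) Let F : ℝ^n ⇉ ℝ^m be a set-valued mapping with closed graph and ȳ ∈ J(F). Then D*F(∞, ȳ)(0) = {0} if and only if 𝓕^∞ = {0}, where 𝓕^∞ denotes the set of all w ∈ ℝ^n × ℝ^m for which there exist sequences (x_k, y_k) ∈ gph F with ‖x_k‖ → ∞ and y_k → ȳ, real numbers r_k > 0 with r_k → 0, and w_k ∈ ∂d_F(x_k, y_k) with r_k·w_k → w. -/

import Mathlib

open Filter Topology Set Metric Pointwise
open scoped RealInnerProductSpace ENNReal

noncomputable section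

variable {E F G : Type*}
  [NormedAddCommGroup E] [InnerProductSpace ℝ E]
  [NormedAddCommGroup F] [InnerProductSpace ℝ F]
  [NormedAddCommGroup G] [InnerProductSpace ℝ G]

/-- The regular (Fréchet) normal cone to a subset of a product of inner product
spaces, at a point `p` (empty if `p ∉ Ω`). -/
def frechetNormalCone2 (Ω : Set (E × F)) (p : E × F) : Set (E × F) :=
  {ξ | p ∈ Ω ∧ ∀ ε > (0:ℝ), ∀ᶠ q in nhdsWithin p Ω,
      ⟪ξ.1, q.1 - p.1⟫ + ⟪ξ.2, q.2 - p.2⟫ ≤ ε * ‖q - p‖}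

/-- The limiting (Mordukhovich) normal cone. -/
def limitingNormalCone2 (Ω : Set (E × F)) (p : E × F) : Set (E × F) :=
  {ξ | ∃ pk : ℕ → E × F, ∃ ξk : ℕ → E × F,
    (∀ k, pk k ∈ Ω) ∧ Tendsto pk atTop (𝓝 p) ∧
    (∀ k, ξk k ∈ frechetNormalCone2 Ω (pk k)) ∧ Tendsto ξk atTop (𝓝 ξ)}

/-- The normal cone to `Ω ⊆ E × F` at `(∞, ȳ)`. -/
def normalConeAtInfty (Ω : Set (E × F)) (ybar : F) : Set (E × F) :=
  {ξ | ∃ pk : ℕ → E × F, ∃ ξk : ℕ → E × F,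
    (∀ k, pk k ∈ Ω) ∧ Tendsto (fun k => ‖(pk k).1‖) atTop atTop ∧
    Tendsto (fun k => (pk k).2) atTop (𝓝 ybar) ∧
    (∀ k, ξk k ∈ frechetNormalCone2 Ω (pk k)) ∧ Tendsto ξk atTop (𝓝 ξ)}

/-- `Ω ⊆ E × F` is locally closed at `(∞, ȳ)`. -/
def LocallyClosedAtInfty (Ω : Set (E × F)) (ybar : F) : Prop :=
  ∃ R > (0:ℝ), ∃ V ∈ 𝓝 ybar, IsClosed V ∧
    IsClosed (Ω ∩ {p : E × F | R ≤ ‖p.1‖ ∧ p.2 ∈ V})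

/-- Graph of a set-valued mapping. -/
def svGraph (S : E → Set F) : Set (E × F) := {p | p.2 ∈ S p.1}

/-- Jelonek set of a set-valued mapping. -/
def jelonek (S : E → Set F) : Set F :=
  {y | ∃ xk : ℕ → E, ∃ yk : ℕ → F,
    Tendsto (fun k => ‖xk k‖) atTop atTop ∧ (∀ k, yk k ∈ S (xk k)) ∧
    Tendsto yk atTop (𝓝 y)}

/-- Coderivative of a set-valued mapping at a point of its graph. -/
def coderiv (S : E → Set F) (x : E) (y : F) (v : F) : Set E :=
  {u | (u, -v) ∈ limitingNormalCone2 (svGraph S) (x, y)}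

/-- Coderivative of a set-valued mapping at `(∞, ȳ)`. -/
def coderivAtInfty (S : E → Set F) (ybar : F) (v : F) : Set E :=
  {u | (u, -v) ∈ normalConeAtInfty (svGraph S) ybar}

/-- Regular normal cone, one-space version. -/
def frechetNormalCone1 (Ω : Set E) (x : E) : Set E :=
  {ξ | x ∈ Ω ∧ ∀ ε > (0:ℝ), ∀ᶠ x' in nhdsWithin x Ω, ⟪ξ, x' - x⟫ ≤ ε * ‖x' - x‖}

/-- Normal cone at infinity to an unbounded subset of `E`. -/
def normalConeAtInfty1 (Ω : Set E) : Set E :=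
  {ξ | ∃ xk : ℕ → E, ∃ ξk : ℕ → E, (∀ k, xk k ∈ Ω) ∧
    Tendsto (fun k => ‖xk k‖) atTop atTop ∧
    (∀ k, ξk k ∈ frechetNormalCone1 Ω (xk k)) ∧ Tendsto ξk atTop (𝓝 ξ)}

/-- Epigraph of an extended-real-valued function. -/
def epiSet (f : E → EReal) : Set (E × ℝ) := {p | f p.1 ≤ (p.2 : EReal)}

/-- Graph of an extended-real-valued function, as a subset of `E × ℝ`. -/
def gphFun (f : E → EReal) : Set (E × ℝ) := {p | f p.1 = (p.2 : EReal)}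

/-- Jelonek set of a function. -/
def jelonekFun (f : E → EReal) : Set ℝ :=
  {y | ∃ xk : ℕ → E, Tendsto (fun k => ‖xk k‖) atTop atTop ∧
    Tendsto (fun k => f (xk k)) atTop (𝓝 (y : EReal))}

/-- Limiting subdifferential of `f` at `x` (empty outside `dom f`). -/
def limSubdiff (f : E → EReal) (x : E) : Set E :=
  {u | ∃ r : ℝ, f x = (r : EReal) ∧
    (u, (-1 : ℝ)) ∈ limitingNormalCone2 (epiSet f) (x, r)}

/-- Limiting subdifferential of `f` at `(∞, ȳ)`. -/
def limSubdiffAtInfty (f : E → EReal) (ybar : ℝ) : Set E :=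
  {u | (u, (-1 : ℝ)) ∈ normalConeAtInfty (epiSet f) ybar}

/-- Singular subdifferential of `f` at `(∞, ȳ)`. -/
def singSubdiffAtInfty (f : E → EReal) (ybar : ℝ) : Set E :=
  {u | (u, (0 : ℝ)) ∈ normalConeAtInfty (epiSet f) ybar}

/-- Inverse of a set-valued mapping. -/
def svInv (S : E → Set F) (y : F) : Set E := {x | y ∈ S x}

/-- Preimage `F⁻¹(V) = {x : F(x) ∩ V ≠ ∅}`. -/
def svPreimage (S : E → Set F) (V : Set F) : Set E := {x | (S x ∩ V).Nonempty}

/-- Distance function of a set-valued mapping, with value `+∞` on empty values. -/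
def dSV (S : E → Set F) (p : E × F) : EReal :=
  ((EMetric.infEdist p.2 (S p.1) : ℝ≥0∞) : EReal)

/-- Regular normal cone on `(E × F) × ℝ`. -/
def frechetNormalCone3 (Ω : Set ((E × F) × ℝ)) (p : (E × F) × ℝ) : Set ((E × F) × ℝ) :=
  {ξ | p ∈ Ω ∧ ∀ ε > (0:ℝ), ∀ᶠ q in nhdsWithin p Ω,
      ⟪ξ.1.1, q.1.1 - p.1.1⟫ + ⟪ξ.1.2, q.1.2 - p.1.2⟫ + ξ.2 * (q.2 - p.2)
        ≤ ε * ‖q - p‖}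

/-- Limiting normal cone on `(E × F) × ℝ`. -/
def limitingNormalCone3 (Ω : Set ((E × F) × ℝ)) (p : (E × F) × ℝ) : Set ((E × F) × ℝ) :=
  {ξ | ∃ pk ξk : ℕ → (E × F) × ℝ, (∀ k, pk k ∈ Ω) ∧ Tendsto pk atTop (𝓝 p) ∧
    (∀ k, ξk k ∈ frechetNormalCone3 Ω (pk k)) ∧ Tendsto ξk atTop (𝓝 ξ)}

/-- Limiting subdifferential of the distance function `d_F`. -/
def limSubdiffD (S : E → Set F) (p : E × F) : Set (E × F) :=
  {w | ∃ r : ℝ, dSV S p = (r : EReal) ∧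
    (w, (-1 : ℝ)) ∈ limitingNormalCone3 {q : (E × F) × ℝ | dSV S q.1 ≤ (q.2 : EReal)} (p, r)}

/-- The set `J⁺(F₁ + F₂, y)`. -/
def jplus (S₁ S₂ : E → Set F) (y : F) : Set (F × F) :=
  {q | ∃ xk : ℕ → E, ∃ y1k y2k : ℕ → F,
    Tendsto (fun k => ‖xk k‖) atTop atTop ∧
    (∀ k, y1k k ∈ S₁ (xk k)) ∧ (∀ k, y2k k ∈ S₂ (xk k)) ∧
    Tendsto y1k atTop (𝓝 q.1) ∧ Tendsto y2k atTop (𝓝 q.2) ∧ q.1 + q.2 = y}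

/-- The set `J°(F₂ ∘ F₁, y)`. -/
def jcirc (S₁ : E → Set G) (S₂ : G → Set F) (y : F) : Set G :=
  {z | ∃ xk : ℕ → E, ∃ zk : ℕ → G, ∃ yk : ℕ → F,
    Tendsto (fun k => ‖xk k‖) atTop atTop ∧ (∀ k, zk k ∈ S₁ (xk k)) ∧
    (∀ k, yk k ∈ S₂ (zk k)) ∧ Tendsto zk atTop (𝓝 z) ∧ Tendsto yk atTop (𝓝 y)}

/-- Composition `F₂ ∘ F₁` of set-valued mappings. -/
def svComp (S₂ : G → Set F) (S₁ : E → Set G) (x : E) : Set F :=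
  {y | ∃ z ∈ S₁ x, y ∈ S₂ z}

abbrev Eucl (n : ℕ) := EuclideanSpace ℝ (Fin n)

/-!
The criterion follows from the identity `𝓕^∞ = D*F(∞, ȳ)(0) × {0}`, which rests on a dictionary
between regular normals to `gph F` and to `epi d_F`; write normals to `ℝⁿ × ℝᵐ` as `(ξ_x, ξ_y)`.
A regular normal `ξ` to the graph at `p` with `‖ξ_y‖ ≤ 1` gives the regular normal `(ξ, -1)` to
`epi d_F` at `(p, 0)`: project a point `(x, y, t)` of the epigraph to a nearest point `(x, v)` of
the graph. Conversely, testing a regular normal `(ζ, λ)` to `epi d_F` against the feasible rays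
`(0, 0, 1)` and `(0, ζ_y, ‖ζ_y‖)` gives `‖ζ_y‖ ≤ -λ`, and a vertical translation of the graph
onto a nearest point shows that `ζ` is a regular normal to the graph there. Hence subgradients
`w` of `d_F` have `‖w_y‖ ≤ 1`, so that `r_k w_k → w` with `r_k → 0` forces `w_y = 0`, and they
are limits of regular normals to the graph at nearby points, which rescaled by `r_k` become
normals at infinity. Conversely, normals `ξ_k → (u, 0)` divided by `r_k ≈ ‖(ξ_k)_y‖ → 0` are
subgradients of `d_F`.
-/

end

lemma Prod.dist_fst_le {α β : Type*} [PseudoMetricSpace α] [PseudoMetricSpace β] (x y : α × β) :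
    dist x.1 y.1 ≤ dist x y :=
  (le_max_left _ _).trans_eq Prod.dist_eq.symm

lemma Prod.dist_snd_le {α β : Type*} [PseudoMetricSpace α] [PseudoMetricSpace β] (x y : α × β) :
    dist x.2 y.2 ≤ dist x y :=
  (le_max_right _ _).trans_eq Prod.dist_eq.symm

lemma tendsto_of_dist_lt_one_div_add_one {α : Type*} [PseudoMetricSpace α] {u : ℕ → α} {a : α}
    (hu : ∀ k : ℕ, dist (u k) a < 1 / ((k : ℝ) + 1)) : Tendsto u atTop (𝓝 a) :=
  tendsto_iff_dist_tendsto_zero.2 <| squeeze_zero (fun _ => dist_nonneg) (fun k => (hu k).le)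
    tendsto_one_div_add_atTop_nhds_zero_nat

lemma isClosed_of_isClosed_svGraph {X Y : Type*} [TopologicalSpace X] [TopologicalSpace Y]
    {S : X → Set Y} (hS : IsClosed (svGraph S)) (x : X) :
    IsClosed (S x) :=
  hS.preimage (Continuous.prodMk_right x)

section DistanceFunction

variable {E F : Type*} [NormedAddCommGroup F]

lemma dSV_eq_zero_of_mem_svGraph {S : E → Set F} {p : E × F} (hp : p ∈ svGraph S) :
    dSV S p = 0 := by
  show ((Metric.infEDist p.2 (S p.1) : ℝ≥0∞) : EReal) = 0
  simp [Metric.infEDist_zero_of_mem (show p.2 ∈ S p.1 from hp)]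

lemma dSV_le_coe_iff [ProperSpace F] {S : E → Set F} (hS : ∀ x, IsClosed (S x))
    {x : E} {y : F} {t : ℝ} : dSV S (x, y) ≤ (t : EReal) ↔ ∃ v ∈ S x, dist y v ≤ t := by
  constructor
  · intro h
    have ht : 0 ≤ t := by exact_mod_cast (EReal.coe_ennreal_nonneg _).trans h
    have h' : Metric.infEDist y (S x) ≤ ENNReal.ofReal t := by
      rwa [← EReal.coe_ennreal_le_coe_ennreal_iff, EReal.coe_ennreal_ofReal, max_eq_left ht]
    have hne : (S x).Nonempty := by
      rw [nonempty_iff_ne_empty, Ne, ← Metric.infEDist_eq_top_iff (x := y)]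
      exact ne_top_of_le_ne_top ENNReal.ofReal_ne_top h'
    obtain ⟨v, hv, hvd⟩ := (hS x).exists_infDist_eq_dist hne y
    exact ⟨v, hv, hvd ▸ ENNReal.toReal_le_of_le_ofReal ht h'⟩
  · rintro ⟨v, hv, hd⟩
    have h : Metric.infEDist y (S x) ≤ ENNReal.ofReal t :=
      (Metric.infEDist_le_edist_of_mem hv).trans (edist_le_ofReal (dist_nonneg.trans hd) |>.2 hd)
    calc dSV S (x, y) ≤ ((ENNReal.ofReal t : ℝ≥0∞) : EReal) :=
          EReal.coe_ennreal_le_coe_ennreal_iff.2 h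
      _ = t := by rw [EReal.coe_ennreal_ofReal, max_eq_left (dist_nonneg.trans hd)]

def epiDist (S : E → Set F) : Set ((E × F) × ℝ) := {q | dSV S q.1 ≤ (q.2 : EReal)}

lemma mem_epiDist_iff [ProperSpace F] {S : E → Set F} (hS : ∀ x, IsClosed (S x))
    {q : (E × F) × ℝ} : q ∈ epiDist S ↔ ∃ v ∈ S q.1.1, dist q.1.2 v ≤ q.2 :=
  dSV_le_coe_iff hS

end DistanceFunction

section Normals

variable {E F : Type*} [NormedAddCommGroup E] [InnerProductSpace ℝ E]
  [NormedAddCommGroup F] [InnerProductSpace ℝ F]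

lemma smul_mem_frechetNormalCone2 {Ω : Set (E × F)} {p ξ : E × F} {c : ℝ} (hc : 0 < c)
    (hξ : ξ ∈ frechetNormalCone2 Ω p) : c • ξ ∈ frechetNormalCone2 Ω p := by
  refine ⟨hξ.1, fun ε hε => ?_⟩
  filter_upwards [hξ.2 (ε / c) (by positivity)] with q hq
  have := mul_le_mul_of_nonneg_left hq hc.le
  rw [← mul_assoc, mul_div_cancel₀ _ hc.ne'] at this
  simpa only [Prod.smul_fst, Prod.smul_snd, real_inner_smul_left, mul_add] using this

lemma pairing_nonpos_of_mem_frechetNormalCone3 {Ω : Set ((E × F) × ℝ)} {q ζ : (E × F) × ℝ}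
    (hζ : ζ ∈ frechetNormalCone3 Ω q) {d : (E × F) × ℝ} (hd : ∀ s > (0 : ℝ), q + s • d ∈ Ω) :
    ⟪ζ.1.1, d.1.1⟫ + ⟪ζ.1.2, d.1.2⟫ + ζ.2 * d.2 ≤ 0 := by
  set L := ⟪ζ.1.1, d.1.1⟫ + ⟪ζ.1.2, d.1.2⟫ + ζ.2 * d.2
  have hray : Tendsto (fun s : ℝ => q + s • d) (𝓝[>] 0) (𝓝[Ω] q) := by
    refine tendsto_nhdsWithin_iff.2 ⟨?_, eventually_nhdsWithin_of_forall hd⟩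
    exact ((continuous_const.add (continuous_id.smul continuous_const)).tendsto' 0 q
      (by simp)).mono_left nhdsWithin_le_nhds
  have hle : ∀ ε > (0 : ℝ), L ≤ ε * ‖d‖ := by
    intro ε hε
    obtain ⟨s, hs, hs0⟩ :=
      ((hray.eventually (hζ.2 ε hε)).and self_mem_nhdsWithin).exists
    simp only [Prod.fst_add, Prod.snd_add, Prod.smul_fst, Prod.smul_snd, add_sub_cancel_left,
      real_inner_smul_right, smul_eq_mul, norm_smul, Real.norm_eq_abs,
      abs_of_pos (show (0 : ℝ) < s from hs0)] at hs
    nlinarith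
  by_contra! hL
  have := hle (L / (‖d‖ + 1)) (by positivity)
  rw [div_mul_eq_mul_div, le_div_iff₀ (by positivity)] at this
  nlinarith

lemma mem_normalConeAtInfty_of_forall_exists {Ω : Set (E × F)} {ybar : F} {ξ : E × F}
    (h : ∀ (R ε : ℝ), 0 < ε → ∃ p ∈ Ω, ∃ ζ ∈ frechetNormalCone2 Ω p,
      R ≤ ‖p.1‖ ∧ dist p.2 ybar < ε ∧ dist ζ ξ < ε) :
    ξ ∈ normalConeAtInfty Ω ybar := by
  choose pk hpk ζk hζk hR hy hζ using fun k : ℕ => h k (1 / ((k : ℝ) + 1)) Nat.one_div_pos_of_nat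
  exact ⟨pk, ζk, hpk, tendsto_atTop_mono hR tendsto_natCast_atTop_atTop,
    tendsto_of_dist_lt_one_div_add_one hy, hζk, tendsto_of_dist_lt_one_div_add_one hζ⟩

lemma mem_limSubdiffD_iff_of_mem_svGraph {S : E → Set F} {p w : E × F} (hp : p ∈ svGraph S) :
    w ∈ limSubdiffD S p ↔ ((w, -1) : (E × F) × ℝ) ∈ limitingNormalCone3 (epiDist S) (p, 0) := by
  refine ⟨fun ⟨r, hr, hw⟩ => ?_, fun hw => ⟨0, dSV_eq_zero_of_mem_svGraph hp, hw⟩⟩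
  rw [dSV_eq_zero_of_mem_svGraph hp, eq_comm, EReal.coe_eq_zero] at hr
  exact hr ▸ hw

section EpigraphNormals

variable [ProperSpace F] {S : E → Set F}

lemma norm_fst_snd_le_of_mem_frechetNormalCone3_epiDist (hS : ∀ x, IsClosed (S x))
    {q ζ : (E × F) × ℝ} (hζ : ζ ∈ frechetNormalCone3 (epiDist S) q) : ‖ζ.1.2‖ ≤ -ζ.2 := by
  obtain ⟨v, hv, hdv⟩ := (mem_epiDist_iff hS).1 hζ.1
  have hray : ∀ (a : F) (c : ℝ), ‖a‖ ≤ c → ∀ s > (0 : ℝ), q + s • ((0, a), c) ∈ epiDist S := by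
    intro a c hac s hs
    refine (mem_epiDist_iff hS).2 ⟨v, by simpa using hv, ?_⟩
    simp only [Prod.fst_add, Prod.snd_add, Prod.smul_fst, Prod.smul_snd, smul_eq_mul]
    calc dist (q.1.2 + s • a) v ≤ dist (q.1.2 + s • a) q.1.2 + dist q.1.2 v := dist_triangle ..
      _ ≤ s * c + q.2 := by
          rw [dist_eq_norm, add_sub_cancel_left, norm_smul, Real.norm_eq_abs, abs_of_pos hs]
          gcongr
      _ = q.2 + s * c := add_comm ..
  have hup := pairing_nonpos_of_mem_frechetNormalCone3 hζ (hray 0 1 (by simp))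
  have hdiag := pairing_nonpos_of_mem_frechetNormalCone3 hζ (hray ζ.1.2 ‖ζ.1.2‖ le_rfl)
  simp only [inner_zero_right, zero_add, mul_one, real_inner_self_eq_norm_sq] at hup hdiag
  nlinarith [norm_nonneg ζ.1.2]

lemma mk_neg_one_mem_frechetNormalCone3_epiDist (hS : ∀ x, IsClosed (S x)) {p ξ : E × F}
    (hξ : ξ ∈ frechetNormalCone2 (svGraph S) p) (h2 : ‖ξ.2‖ ≤ 1) :
    ((ξ, -1) : (E × F) × ℝ) ∈ frechetNormalCone3 (epiDist S) (p, 0) := by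
  obtain ⟨hp, hξ⟩ := hξ
  refine ⟨(mem_epiDist_iff hS).2 ⟨p.2, hp, by simp⟩, fun ε hε => ?_⟩
  obtain ⟨δ, hδ, hδξ⟩ := Metric.eventually_nhds_iff.1
    (eventually_nhdsWithin_iff.1 (hξ (ε / 2) (by positivity)))
  rw [eventually_nhdsWithin_iff, Metric.eventually_nhds_iff]
  refine ⟨δ / 2, by positivity, ?_⟩
  rintro ⟨q, t⟩ hqt hmem
  obtain ⟨v, hv, hdv⟩ := (mem_epiDist_iff hS).1 hmem
  set D := dist ((q, t) : (E × F) × ℝ) (p, 0)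
  have hqD : dist q p ≤ D := Prod.dist_fst_le ((q, t) : (E × F) × ℝ) (p, 0)
  have htD : t ≤ D := by
    have := Prod.dist_snd_le ((q, t) : (E × F) × ℝ) (p, 0)
    rw [Real.dist_eq, sub_zero] at this
    exact (le_abs_self t).trans this
  have hvp : dist ((q.1, v) : E × F) p ≤ 2 * D := by
    have : dist ((q.1, v) : E × F) q ≤ t := by
      rw [Prod.dist_eq, dist_self, dist_comm]
      exact max_le (dist_nonneg.trans hdv) hdv
    linarith [dist_triangle ((q.1, v) : E × F) q p]
  have hkey := hδξ (by linarith) hv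
  have hcross : ⟪ξ.2, q.2 - v⟫ ≤ t := by
    calc ⟪ξ.2, q.2 - v⟫ ≤ ‖ξ.2‖ * ‖q.2 - v‖ := real_inner_le_norm _ _
      _ ≤ 1 * dist q.2 v := by rw [← dist_eq_norm]; gcongr
      _ ≤ t := by rw [one_mul]; exact hdv
  show ⟪ξ.1, q.1 - p.1⟫ + ⟪ξ.2, q.2 - p.2⟫ + -1 * (t - 0) ≤ ε * ‖(q, t) - (p, 0)‖
  rw [← dist_eq_norm]
  calc ⟪ξ.1, q.1 - p.1⟫ + ⟪ξ.2, q.2 - p.2⟫ + -1 * (t - 0)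
      = ⟪ξ.1, q.1 - p.1⟫ + ⟪ξ.2, v - p.2⟫ + (⟪ξ.2, q.2 - v⟫ - t) := by
        rw [← sub_add_sub_cancel q.2 v p.2, inner_add_right]; ring
    _ ≤ ε / 2 * dist ((q.1, v) : E × F) p := by rw [dist_eq_norm]; linarith
    _ ≤ ε * D := by nlinarith

lemma exists_mem_frechetNormalCone2_of_mem_frechetNormalCone3_epiDist
    (hS : ∀ x, IsClosed (S x)) {q ζ : (E × F) × ℝ} (hζ : ζ ∈ frechetNormalCone3 (epiDist S) q) :
    ∃ v ∈ S q.1.1, dist q.1.2 v ≤ q.2 ∧ ζ.1 ∈ frechetNormalCone2 (svGraph S) (q.1.1, v) := by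
  obtain ⟨v, hv, hdv⟩ := (mem_epiDist_iff hS).1 hζ.1
  refine ⟨v, hv, hdv, hv, fun ε hε => ?_⟩
  -- `T` maps the graph into `epiDist S`, sends `(q.1.1, v)` to `q` and preserves distances
  set T : E × F → (E × F) × ℝ := fun p' => q + (p' - (q.1.1, v), 0)
  have hT : Tendsto T (𝓝[svGraph S] (q.1.1, v)) (𝓝[epiDist S] q) := by
    have hmaps : MapsTo T (svGraph S) (epiDist S) := by
      intro p' (hp' : p'.2 ∈ S p'.1)
      refine (mem_epiDist_iff hS).2 ⟨p'.2, by simpa [T] using hp', ?_⟩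
      show dist (q.1.2 + (p'.2 - v)) p'.2 ≤ q.2 + 0
      rw [add_zero, dist_eq_norm, add_sub_assoc, sub_sub_cancel_left, ← sub_eq_add_neg,
        ← dist_eq_norm]
      exact hdv
    have hTq : T (q.1.1, v) = q := by simp [T]
    have := (Continuous.continuousWithinAt (by fun_prop)).tendsto_nhdsWithin
      (x := ((q.1.1, v) : E × F)) hmaps
    rwa [hTq] at this
  filter_upwards [hT.eventually (hζ.2 ε hε)] with p' hp'
  simpa [T, Prod.norm_def] using hp'

lemma mem_limSubdiffD_of_mem_frechetNormalCone2 (hS : ∀ x, IsClosed (S x)) {p ξ : E × F}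
    (hξ : ξ ∈ frechetNormalCone2 (svGraph S) p) (h2 : ‖ξ.2‖ ≤ 1) : ξ ∈ limSubdiffD S p :=
  (mem_limSubdiffD_iff_of_mem_svGraph hξ.1).2 ⟨fun _ => (p, 0), fun _ => (ξ, -1),
    fun _ => (mk_neg_one_mem_frechetNormalCone3_epiDist hS hξ h2).1, tendsto_const_nhds,
    fun _ => mk_neg_one_mem_frechetNormalCone3_epiDist hS hξ h2, tendsto_const_nhds⟩

lemma norm_snd_le_one_of_mem_limSubdiffD (hS : ∀ x, IsClosed (S x)) {p w : E × F}
    (hw : w ∈ limSubdiffD S p) : ‖w.2‖ ≤ 1 := by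
  obtain ⟨r, -, pk, ζk, -, -, hζk, hlim⟩ := hw
  have hnorm : Tendsto (fun k => ‖(ζk k).1.2‖) atTop (𝓝 ‖w.2‖) :=
    ((continuous_snd.comp continuous_fst).tendsto _ |>.comp hlim).norm
  have hneg : Tendsto (fun k => -(ζk k).2) atTop (𝓝 1) := by
    simpa using ((continuous_snd.tendsto _).comp hlim).neg
  exact le_of_tendsto_of_tendsto' hnorm hneg
    fun k => norm_fst_snd_le_of_mem_frechetNormalCone3_epiDist hS (hζk k)

lemma exists_frechetNormal_near_of_mem_limSubdiffD (hS : ∀ x, IsClosed (S x)) {p w : E × F}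
    (hp : p ∈ svGraph S) (hw : w ∈ limSubdiffD S p) {η : ℝ} (hη : 0 < η) :
    ∃ p' ∈ svGraph S, ∃ ζ ∈ frechetNormalCone2 (svGraph S) p', dist p' p < η ∧ dist ζ w < η := by
  obtain ⟨qk, ζk, -, hqk, hζk, hlim⟩ := (mem_limSubdiffD_iff_of_mem_svGraph hp).1 hw
  obtain ⟨k, hqη, hζη⟩ := ((Metric.tendsto_nhds.1 hqk _ (half_pos hη)).and
    (Metric.tendsto_nhds.1 hlim _ hη)).exists
  obtain ⟨v, hv, hdv, hvζ⟩ :=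
    exists_mem_frechetNormalCone2_of_mem_frechetNormalCone3_epiDist hS (hζk k)
  refine ⟨((qk k).1.1, v), hv, (ζk k).1, hvζ, ?_, ?_⟩
  · have hx : dist (qk k).1.1 p.1 < η / 2 :=
      (Prod.dist_fst_le _ _).trans_lt ((Prod.dist_fst_le _ _).trans_lt hqη)
    have hy : dist (qk k).1.2 p.2 < η / 2 :=
      (Prod.dist_snd_le _ _).trans_lt ((Prod.dist_fst_le _ _).trans_lt hqη)
    have ht : (qk k).2 < η / 2 := by
      have := (Prod.dist_snd_le _ _).trans_lt hqη
      rw [Real.dist_eq, sub_zero] at this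
      exact (le_abs_self _).trans_lt this
    rw [Prod.dist_eq, max_lt_iff]
    refine ⟨hx.trans (half_lt_self hη), ?_⟩
    linarith [dist_triangle_left v p.2 (qk k).1.2]
  · exact (Prod.dist_fst_le _ _).trans_lt hζη

end EpigraphNormals

/-- The set `𝓕^∞` of the criterion. -/
def horizonLimSubdiffD (S : E → Set F) (ybar : F) : Set (E × F) :=
  {w | ∃ pk : ℕ → E × F, ∃ rk : ℕ → ℝ, ∃ wk : ℕ → E × F,
    (∀ k, pk k ∈ svGraph S) ∧
    Tendsto (fun k => ‖(pk k).1‖) atTop atTop ∧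
    Tendsto (fun k => (pk k).2) atTop (𝓝 ybar) ∧
    (∀ k, 0 < rk k) ∧ Tendsto rk atTop (𝓝 0) ∧
    (∀ k, wk k ∈ limSubdiffD S (pk k)) ∧
    Tendsto (fun k => rk k • wk k) atTop (𝓝 w)}

section Horizon

variable [ProperSpace F] {S : E → Set F} {ybar : F}

lemma mk_zero_mem_horizonLimSubdiffD (hS : ∀ x, IsClosed (S x)) {u : E}
    (hu : u ∈ coderivAtInfty S ybar 0) : ((u, 0) : E × F) ∈ horizonLimSubdiffD S ybar := by
  obtain ⟨pk, ξk, hpk, hx, hy, hξk, hlim⟩ := hu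
  -- rescale `ξ_k` by `r_k ≥ ‖(ξ_k).2‖` so that the second component has norm at most one
  set rk : ℕ → ℝ := fun k => ‖(ξk k).2‖ + 1 / ((k : ℝ) + 1)
  have hrk : ∀ k, 0 < rk k := fun k => by positivity
  have hrk0 : Tendsto rk atTop (𝓝 0) := by
    simpa [rk] using ((continuous_snd.tendsto _).comp hlim).norm.add
      tendsto_one_div_add_atTop_nhds_zero_nat
  have hsub : ∀ k, (rk k)⁻¹ • ξk k ∈ limSubdiffD S (pk k) := fun k => by
    refine mem_limSubdiffD_of_mem_frechetNormalCone2 hS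
      (smul_mem_frechetNormalCone2 (inv_pos.2 (hrk k)) (hξk k)) ?_
    rw [Prod.smul_snd, norm_smul, Real.norm_eq_abs, abs_inv, abs_of_pos (hrk k),
      inv_mul_le_one₀ (hrk k)]
    exact le_add_of_nonneg_right Nat.one_div_pos_of_nat.le
  refine ⟨pk, rk, fun k => (rk k)⁻¹ • ξk k, hpk, hx, hy, hrk, hrk0, hsub, ?_⟩
  simpa [smul_inv_smul₀ (hrk _).ne'] using hlim

lemma snd_eq_zero_of_mem_horizonLimSubdiffD (hS : ∀ x, IsClosed (S x)) {w : E × F}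
    (hw : w ∈ horizonLimSubdiffD S ybar) : w.2 = 0 := by
  obtain ⟨pk, rk, wk, -, -, -, hrk, hrk0, hwk, hlim⟩ := hw
  refine tendsto_nhds_unique ((continuous_snd.tendsto _).comp hlim)
    (squeeze_zero_norm (fun k => ?_) hrk0)
  calc ‖(rk k • wk k).2‖ = rk k * ‖(wk k).2‖ := by
        rw [Prod.smul_snd, norm_smul, Real.norm_eq_abs, abs_of_pos (hrk k)]
    _ ≤ rk k * 1 :=
        mul_le_mul_of_nonneg_left (norm_snd_le_one_of_mem_limSubdiffD hS (hwk k)) (hrk k).le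
    _ = rk k := mul_one _

lemma mem_normalConeAtInfty_of_mem_horizonLimSubdiffD (hS : ∀ x, IsClosed (S x)) {w : E × F}
    (hw : w ∈ horizonLimSubdiffD S ybar) : w ∈ normalConeAtInfty (svGraph S) ybar := by
  obtain ⟨pk, rk, wk, hpk, hx, hy, hrk, -, hwk, hlim⟩ := hw
  refine mem_normalConeAtInfty_of_forall_exists fun R ε hε => ?_
  obtain ⟨k, hxk, hyk, hwk'⟩ := ((tendsto_atTop.1 hx (R + ε)).and
    ((Metric.tendsto_nhds.1 hy _ (half_pos hε)).and
      (Metric.tendsto_nhds.1 hlim _ (half_pos hε)))).exists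
  -- `η` is chosen so that both `η` and `r_k η` are at most `ε / 2`
  set η := ε / (2 * (1 + rk k))
  have hη : 0 < η := by have := hrk k; positivity
  have hηr : η + rk k * η = ε / 2 := by
    have : 0 < 1 + rk k := by linarith [hrk k]
    simp only [η]; field_simp
  obtain ⟨p, hp, ζ, hζ, hpd, hζd⟩ :=
    exists_frechetNormal_near_of_mem_limSubdiffD hS (hpk k) (hwk k) hη
  refine ⟨p, hp, rk k • ζ, smul_mem_frechetNormalCone2 (hrk k) hζ, ?_, ?_, ?_⟩
  · have := norm_sub_norm_le (pk k).1 p.1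
    rw [← dist_eq_norm] at this
    nlinarith [Prod.dist_fst_le (pk k) p, dist_comm (pk k) p, hrk k]
  · nlinarith [dist_triangle p.2 (pk k).2 ybar, Prod.dist_snd_le p (pk k), hrk k]
  · have : dist (rk k • ζ) (rk k • wk k) < rk k * η := by
      rw [dist_smul₀, Real.norm_eq_abs, abs_of_pos (hrk k)]
      exact mul_lt_mul_of_pos_left hζd (hrk k)
    nlinarith [dist_triangle (rk k • ζ) (rk k • wk k) w]

theorem horizonLimSubdiffD_eq_image (hS : ∀ x, IsClosed (S x)) :
    horizonLimSubdiffD S ybar = (fun u => (u, (0 : F))) '' coderivAtInfty S ybar 0 := by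
  ext w
  refine ⟨fun hw => ⟨w.1, ?_, ?_⟩, ?_⟩
  · show (w.1, -(0 : F)) ∈ normalConeAtInfty (svGraph S) ybar
    rw [neg_zero, ← snd_eq_zero_of_mem_horizonLimSubdiffD hS hw]
    exact mem_normalConeAtInfty_of_mem_horizonLimSubdiffD hS hw
  · rw [← snd_eq_zero_of_mem_horizonLimSubdiffD hS hw]
  · rintro ⟨u, hu, rfl⟩
    exact mk_zero_mem_horizonLimSubdiffD hS hu

end Horizon

end Normals

theorem stmt17_general {n m : ℕ} (S : Eucl n → Set (Eucl m)) (hS : IsClosed (svGraph S))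
    (ybar : Eucl m) :
    coderivAtInfty S ybar 0 = ({0} : Set (Eucl n)) ↔
      {w : Eucl n × Eucl m |
        ∃ pk : ℕ → Eucl n × Eucl m, ∃ rk : ℕ → ℝ, ∃ wk : ℕ → Eucl n × Eucl m,
          (∀ k, pk k ∈ svGraph S) ∧
          Tendsto (fun k => ‖(pk k).1‖) atTop atTop ∧
          Tendsto (fun k => (pk k).2) atTop (𝓝 ybar) ∧
          (∀ k, 0 < rk k) ∧ Tendsto rk atTop (𝓝 0) ∧
          (∀ k, wk k ∈ limSubdiffD S (pk k)) ∧
          Tendsto (fun k => rk k • wk k) atTop (𝓝 w)} = {0} := by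
  change _ ↔ horizonLimSubdiffD S ybar = {0}
  have hzero : ({0} : Set (Eucl n × Eucl m)) = (fun u => (u, (0 : Eucl m))) '' {0} := by
    rw [image_singleton, Prod.mk_zero_zero]
  rw [horizonLimSubdiffD_eq_image (isClosed_of_isClosed_svGraph hS), hzero,
    (image_injective.2 (Prod.mk_left_injective 0)).eq_iff]

/-- Mordukhovich's criterion at infinity, subdifferential form. -/
theorem stmt17 {n m : ℕ} (S : Eucl n → Set (Eucl m)) (hS : IsClosed (svGraph S))
    (ybar : Eucl m) (hJ : ybar ∈ jelonek S) :
    coderivAtInfty S ybar 0 = ({0} : Set (Eucl n)) ↔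
      {w : Eucl n × Eucl m |
        ∃ pk : ℕ → Eucl n × Eucl m, ∃ rk : ℕ → ℝ, ∃ wk : ℕ → Eucl n × Eucl m,
          (∀ k, pk k ∈ svGraph S) ∧
          Tendsto (fun k => ‖(pk k).1‖) atTop atTop ∧
          Tendsto (fun k => (pk k).2) atTop (𝓝 ybar) ∧
          (∀ k, 0 < rk k) ∧ Tendsto rk atTop (𝓝 0) ∧
          (∀ k, wk k ∈ limSubdiffD S (pk k)) ∧
          Tendsto (fun k => rk k • wk k) atTop (𝓝 w)} = {0} :=
  stmt17_general S hS ybar
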